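/- Pairs (ζ, α) of functions satisfying -2α' = C + bζ and αζ' = -bζ² + (2B - C)ζ, with ζ nowhere zero, also satisfy the second-order system ζ(αζ'' - α'ζ' - Cζ') - α(ζ')² = 0 and ζ(-2α''ζ + αζ'' + α'ζ') - α(ζ')² = 0. -/

import Mathlib

/-! Since `I` is open, both first-order equations may be differentiated at every point of `I`;
the two second-order identities are then linear combinations of the first-order equations and
their derivatives. -/

open Filter Set

theorem HasDerivAt.eq_of_eqOn {𝕜 F : Type*} [NontriviallyNormedField 𝕜] [NormedAddCommGroup F]
    [NormedSpace 𝕜 F] {f g : 𝕜 → F} {f' g' : F} {z : 𝕜} {s : Set 𝕜} (hs : IsOpen s)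
    (hfg : EqOn f g s) (hz : z ∈ s) (hf : HasDerivAt f f' z) (hg : HasDerivAt g g' z) :
    f' = g' :=
  (hf.congr_of_eventuallyEq (eventuallyEq_of_mem (hs.mem_nhds hz) hfg).symm).unique hg

theorem second_order_identities_of_first_order {ζ ζ' ζ'' α α' α'' b B C : ℝ}
    (h₁ : -2 * α' = C + b * ζ) (h₂ : α * ζ' = -b * ζ ^ 2 + (2 * B - C) * ζ)
    (h₁' : -2 * α'' = b * ζ')
    (h₂' : α' * ζ' + α * ζ'' = -b * (2 * ζ * ζ') + (2 * B - C) * ζ') :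
    ζ * (α * ζ'' - α' * ζ' - C * ζ') = α * ζ' ^ 2 ∧
      ζ * (-2 * α'' * ζ + α * ζ'' + α' * ζ') = α * ζ' ^ 2 :=
  ⟨by linear_combination ζ * h₂' + ζ * ζ' * h₁ - ζ' * h₂,
    by linear_combination ζ ^ 2 * h₁' + ζ * h₂' - ζ' * h₂⟩

theorem first_order_implies_second_order_system_general
    (I : Set ℝ) (hI : IsOpen I)
    (ζ ζ' ζ'' α α' α'' : ℝ → ℝ) (b B C : ℝ)
    (hζd : ∀ z ∈ I, HasDerivAt ζ (ζ' z) z)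
    (hζd2 : ∀ z ∈ I, HasDerivAt ζ' (ζ'' z) z)
    (hαd : ∀ z ∈ I, HasDerivAt α (α' z) z)
    (hαd2 : ∀ z ∈ I, HasDerivAt α' (α'' z) z)
    (heq1 : ∀ z ∈ I, -2 * α' z = C + b * ζ z)
    (heq2 : ∀ z ∈ I, α z * ζ' z = -b * (ζ z) ^ 2 + (2 * B - C) * ζ z) :
    ∀ z ∈ I,
      ζ z * (α z * ζ'' z - α' z * ζ' z - C * ζ' z) = α z * (ζ' z) ^ 2 ∧
      ζ z * (-2 * α'' z * ζ z + α z * ζ'' z + α' z * ζ' z) = α z * (ζ' z) ^ 2 := by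
  intro z hz
  have heq1' : -2 * α'' z = b * ζ' z :=
    ((hαd2 z hz).const_mul (-2)).eq_of_eqOn hI heq1 hz (((hζd z hz).const_mul b).const_add C)
  have heq2' : α' z * ζ' z + α z * ζ'' z = -b * (2 * ζ z * ζ' z) + (2 * B - C) * ζ' z := by
    have hrhs : HasDerivAt (fun x => -b * ζ x ^ 2 + (2 * B - C) * ζ x)
        (-b * (2 * ζ z * ζ' z) + (2 * B - C) * ζ' z) z :=
      ((((hζd z hz).fun_pow 2).const_mul (-b)).add ((hζd z hz).const_mul (2 * B - C))).congr_deriv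
        (by norm_num)
    exact HasDerivAt.eq_of_eqOn hI heq2 hz ((hαd z hz).mul (hζd2 z hz)) hrhs
  exact second_order_identities_of_first_order (heq1 z hz) (heq2 z hz) heq1' heq2'

theorem first_order_implies_second_order_system
    (I : Set ℝ) (hI : IsOpen I)
    (ζ ζ' ζ'' α α' α'' : ℝ → ℝ) (b B C : ℝ)
    (hζd : ∀ z ∈ I, HasDerivAt ζ (ζ' z) z)
    (hζd2 : ∀ z ∈ I, HasDerivAt ζ' (ζ'' z) z)
    (hαd : ∀ z ∈ I, HasDerivAt α (α' z) z)
    (hαd2 : ∀ z ∈ I, HasDerivAt α' (α'' z) z)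
    (hζne : ∀ z ∈ I, ζ z ≠ 0)
    (heq1 : ∀ z ∈ I, -2 * α' z = C + b * ζ z)
    (heq2 : ∀ z ∈ I, α z * ζ' z = -b * (ζ z) ^ 2 + (2 * B - C) * ζ z) :
    ∀ z ∈ I,
      ζ z * (α z * ζ'' z - α' z * ζ' z - C * ζ' z) = α z * (ζ' z) ^ 2 ∧
      ζ z * (-2 * α'' z * ζ z + α z * ζ'' z + α' z * ζ' z) = α z * (ζ' z) ^ 2 :=
  first_order_implies_second_order_system_general I hI ζ ζ' ζ'' α α' α'' b B C hζd hζd2 hαd hαd2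
    heq1 heq2
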